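/- arXiv:2509.03333 — 2 statements merged into one kernel-verified Lean document; each statement's English description precedes it below -/
import Mathlib

section
/- Let H be a real Hilbert space, C ⊆ H a nonempty closed convex set, and f : H → ℝ differentiable with L-Lipschitz gradient (L > 0). Let 0 < μ ≤ 1/L, let x ∈ C, and let x⁺ = proj_C(x − μ·∇f(x)) be the metric projection of x − μ·∇f(x) onto C. Then f(x⁺) ≤ f(x) − (1/(2μ))·‖x⁺ − x‖²; equivalently, with the gradient mapping 𝒫(μ, x) = (x − x⁺)/μ, one has f(x⁺) ≤ f(x) − (μ/2)·‖𝒫(μ, x)‖². -/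
/-!
For `d = x⁺ - x`, two inequalities combine. Lipschitz continuity of the gradient gives the
descent lemma `f x⁺ ≤ f x + ⟪∇f x, d⟫ + L/2 ‖d‖²`. Testing the variational characterisation of
the projection of `x - μ ∇f x` against the point `x ∈ C` gives `μ ⟪∇f x, d⟫ ≤ -‖d‖²`.
Since `L μ ≤ 1`, the sum is at most `-‖d‖² / (2μ)`.
-/

open InnerProductSpace

section Projection

variable {H : Type*} [NormedAddCommGroup H] [InnerProductSpace ℝ H]

theorem real_inner_sub_le_zero_of_forall_norm_sub_le {K : Set H} (hK : Convex ℝ K) {u v : H}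
    (hv : v ∈ K) (hmin : ∀ w ∈ K, ‖u - v‖ ≤ ‖u - w‖) : ∀ w ∈ K, ⟪u - v, w - v⟫_ℝ ≤ 0 := by
  have : Nonempty K := ⟨⟨v, hv⟩⟩
  refine (norm_eq_iInf_iff_real_inner_le_zero hK hv).1 (le_antisymm ?_ ?_)
  · exact le_ciInf fun w ↦ hmin w w.2
  · exact ciInf_le ⟨0, Set.forall_mem_range.2 fun _ ↦ norm_nonneg _⟩ (⟨v, hv⟩ : K)

theorem mul_inner_sub_le_neg_norm_sq_of_forall_norm_sub_le {K : Set H} (hK : Convex ℝ K)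
    {x v g : H} {μ : ℝ} (hx : x ∈ K) (hv : v ∈ K)
    (hmin : ∀ w ∈ K, ‖x - μ • g - v‖ ≤ ‖x - μ • g - w‖) :
    μ * ⟪g, v - x⟫_ℝ ≤ -‖v - x‖ ^ 2 := by
  have h := real_inner_sub_le_zero_of_forall_norm_sub_le hK hv hmin x hx
  rw [show x - μ • g - v = -(v - x) - μ • g by abel, ← neg_sub v x, inner_neg_right,
    inner_sub_left, inner_neg_left, real_inner_self_eq_norm_sq, real_inner_smul_left] at h
  linarith

end Projection

section Descent

variable {H : Type*} [NormedAddCommGroup H] [InnerProductSpace ℝ H] [CompleteSpace H]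

theorem HasGradientAt.hasDerivAt_comp_add_smul {f : H → ℝ} {g x d : H} {t : ℝ}
    (hf : HasGradientAt f g (x + t • d)) :
    HasDerivAt (fun s : ℝ ↦ f (x + s • d)) ⟪g, d⟫_ℝ t := by
  have hline : HasDerivAt (fun s : ℝ ↦ x + s • d) d t := by
    simpa using ((hasDerivAt_id t).smul_const d).const_add x
  have h := hf.hasFDerivAt.comp_hasDerivAt t hline
  simp only [Function.comp_def, toDual_apply_apply] at h
  exact h

theorem le_add_inner_add_half_mul_norm_sq_of_lipschitz_gradient {f : H → ℝ} {f' : H → H}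
    {L : ℝ} (hf : ∀ y, HasGradientAt f (f' y) y)
    (hLip : ∀ u v, ‖f' u - f' v‖ ≤ L * ‖u - v‖) (x y : H) :
    f y ≤ f x + ⟪f' x, y - x⟫_ℝ + L / 2 * ‖y - x‖ ^ 2 := by
  set d := y - x
  -- `f` minus its quadratic upper model along the segment; comparing `φ 1 ≤ φ 0` avoids integrals
  let φ : ℝ → ℝ := fun t ↦ f (x + t • d) - t * ⟪f' x, d⟫_ℝ - L / 2 * t ^ 2 * ‖d‖ ^ 2
  let φ' : ℝ → ℝ := fun t ↦ ⟪f' (x + t • d) - f' x, d⟫_ℝ - L * t * ‖d‖ ^ 2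
  have hφ : ∀ t, HasDerivAt φ (φ' t) t := fun t ↦
    (((hf (x + t • d)).hasDerivAt_comp_add_smul.sub
      ((hasDerivAt_id t).mul_const ⟪f' x, d⟫_ℝ)).sub
      (((hasDerivAt_pow 2 t).const_mul (L / 2)).mul_const (‖d‖ ^ 2))).congr_deriv
      (by simp only [φ', inner_sub_left]; ring)
  have hφ'_nonpos : ∀ t ∈ interior (Set.Ici (0 : ℝ)), φ' t ≤ 0 := by
    rw [interior_Ici]
    intro t (ht : 0 < t)
    refine sub_nonpos.2 ?_
    calc ⟪f' (x + t • d) - f' x, d⟫_ℝ ≤ ‖f' (x + t • d) - f' x‖ * ‖d‖ := real_inner_le_norm _ _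
      _ ≤ L * ‖x + t • d - x‖ * ‖d‖ := by gcongr; exact hLip _ _
      _ = L * t * ‖d‖ ^ 2 := by
        rw [add_sub_cancel_left, norm_smul, Real.norm_of_nonneg ht.le]; ring
  have hanti : AntitoneOn φ (Set.Ici 0) :=
    antitoneOn_of_hasDerivWithinAt_nonpos (convex_Ici 0)
      (fun t _ ↦ (hφ t).continuousAt.continuousWithinAt)
      (fun t _ ↦ (hφ t).hasDerivWithinAt) hφ'_nonpos
  have h := hanti Set.self_mem_Ici (Set.mem_Ici.2 zero_le_one) zero_le_one
  norm_num [φ, d] at h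
  linarith

end Descent

theorem projected_gradient_sufficient_decrease_general
    {H : Type*} [NormedAddCommGroup H] [InnerProductSpace ℝ H] [CompleteSpace H]
    (C : Set H) (hCconv : Convex ℝ C)
    (f : H → ℝ) (L : ℝ) (hL : 0 < L)
    (hdiff : Differentiable ℝ f)
    (hLip : ∀ u v : H, ‖gradient f u - gradient f v‖ ≤ L * ‖u - v‖)
    (μ : ℝ) (hμ : 0 < μ) (hμL : μ ≤ 1 / L)
    (x : H) (hx : x ∈ C)
    (xp : H) (hxpC : xp ∈ C)
    (hproj : ∀ y ∈ C, ‖x - μ • gradient f x - xp‖ ≤ ‖x - μ • gradient f x - y‖) :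
    f xp ≤ f x - (1 / (2 * μ)) * ‖xp - x‖ ^ 2 := by
  have hdescent := le_add_inner_add_half_mul_norm_sq_of_lipschitz_gradient
    (fun y ↦ (hdiff y).hasGradientAt) hLip x xp
  have hstep := mul_inner_sub_le_neg_norm_sq_of_forall_norm_sub_le hCconv hx hxpC hproj
  have hLμ : L * μ ≤ 1 := by rwa [le_div_iff₀ hL, mul_comm] at hμL
  have hinner : ⟪gradient f x, xp - x⟫_ℝ ≤ -‖xp - x‖ ^ 2 / μ := by
    rwa [le_div_iff₀ hμ, mul_comm]
  have hcurv : L / 2 * ‖xp - x‖ ^ 2 ≤ ‖xp - x‖ ^ 2 / (2 * μ) := by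
    rw [le_div_iff₀ (by positivity)]
    nlinarith [sq_nonneg ‖xp - x‖]
  calc f xp ≤ f x + -‖xp - x‖ ^ 2 / μ + ‖xp - x‖ ^ 2 / (2 * μ) := by linarith
    _ = f x - 1 / (2 * μ) * ‖xp - x‖ ^ 2 := by field_simp; ring

/-- Sufficient decrease of one projected gradient step for an `L`-smooth function on a
Hilbert space, with step size `0 < μ ≤ 1/L`. -/
theorem projected_gradient_sufficient_decrease
    {H : Type*} [NormedAddCommGroup H] [InnerProductSpace ℝ H] [CompleteSpace H]
    (C : Set H) (hCclosed : IsClosed C) (hCconv : Convex ℝ C) (hCne : C.Nonempty)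
    (f : H → ℝ) (L : ℝ) (hL : 0 < L)
    (hdiff : Differentiable ℝ f)
    (hLip : ∀ u v : H, ‖gradient f u - gradient f v‖ ≤ L * ‖u - v‖)
    (μ : ℝ) (hμ : 0 < μ) (hμL : μ ≤ 1 / L)
    (x : H) (hx : x ∈ C)
    (xp : H) (hxpC : xp ∈ C)
    (hproj : ∀ y ∈ C, ‖x - μ • gradient f x - xp‖ ≤ ‖x - μ • gradient f x - y‖) :
    f xp ≤ f x - (1 / (2 * μ)) * ‖xp - x‖ ^ 2 :=
  projected_gradient_sufficient_decrease_general C hCconv f L hL hdiff hLip μ hμ hμL x hx xp hxpC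
    hproj
end

section
/- Let H be a real Hilbert space, C ⊆ H a nonempty closed convex set, f : H → ℝ continuously differentiable, and μ > 0. Let (x_t) ⊆ C satisfy x_{t+1} = proj_C(x_t − μ·∇f(x_t)). Suppose a subsequence (x_{t_j}) converges to x* and ‖x_{t_j+1} − x_{t_j}‖ → 0. Then x* ∈ C, x* = proj_C(x* − μ·∇f(x*)), and x* is a stationary point of f over C: ⟨∇f(x*), y − x*⟩ ≥ 0 for all y ∈ C. -/
/-!
Along the subsequence both `x (φ j)` and `x (φ j + 1)` tend to `x*`, and the gradient step
`z ↦ z - μ • ∇f z` is continuous, so the nearest-point inequalities defining `x (φ j + 1)` pass to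
the limit: `x*` is the projection of `x* - μ • ∇f x*` onto the closed set `C`. By the variational
characterization of projections onto convex sets, `⟪-μ • ∇f x*, y - x*⟫ ≤ 0` for `y ∈ C`, and
dividing by `μ > 0` gives stationarity.
-/

open Filter Topology RealInnerProductSpace

theorem ContDiff.continuous_gradient {𝕜 F : Type*} [RCLike 𝕜] [NormedAddCommGroup F]
    [InnerProductSpace 𝕜 F] [CompleteSpace F] {f : F → 𝕜} {n : WithTop ℕ∞}
    (hf : ContDiff 𝕜 n f) (hn : n ≠ 0) : Continuous (gradient f) :=
  (InnerProductSpace.toDual 𝕜 F).symm.continuous.comp (hf.continuous_fderiv hn)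

section NearestPoint

variable {F : Type*} [NormedAddCommGroup F] [InnerProductSpace ℝ F] {K : Set F} {u v : F}

theorem real_inner_le_zero_of_forall_norm_sub_le (hK : Convex ℝ K) (hv : v ∈ K)
    (hmin : ∀ w ∈ K, ‖u - v‖ ≤ ‖u - w‖) : ∀ w ∈ K, ⟪u - v, w - v⟫ ≤ 0 := by
  have : Nonempty K := ⟨⟨v, hv⟩⟩
  refine (norm_eq_iInf_iff_real_inner_le_zero hK hv).1 (le_antisymm ?_ ?_)
  · exact le_ciInf fun w => hmin w w.2
  · exact ciInf_le (f := fun w : K => ‖u - w‖) ⟨0, Set.forall_mem_range.2 fun _ => norm_nonneg _⟩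
      ⟨v, hv⟩

theorem real_inner_nonneg_of_forall_norm_sub_smul_le (hK : Convex ℝ K) (hv : v ∈ K)
    {μ : ℝ} (hμ : 0 < μ) {g : F} (hmin : ∀ w ∈ K, ‖v - μ • g - v‖ ≤ ‖v - μ • g - w‖) :
    ∀ w ∈ K, 0 ≤ ⟪g, w - v⟫ := by
  intro w hw
  have h := real_inner_le_zero_of_forall_norm_sub_le hK hv hmin w hw
  rw [sub_sub_cancel_left, inner_neg_left, inner_smul_left, neg_nonpos] at h
  exact nonneg_of_mul_nonneg_right h hμ

end NearestPoint

theorem projected_gradient_cluster_point_stationary_general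
    {H : Type*} [NormedAddCommGroup H] [InnerProductSpace ℝ H] [CompleteSpace H]
    (C : Set H) (hCclosed : IsClosed C) (hCconv : Convex ℝ C)
    (f : H → ℝ) (hf : ContDiff ℝ 1 f)
    (μ : ℝ) (hμ : 0 < μ)
    (x : ℕ → H) (hmem : ∀ t : ℕ, x t ∈ C)
    (hproj : ∀ t : ℕ, ∀ y ∈ C,
      ‖x t - μ • gradient f (x t) - x (t + 1)‖ ≤ ‖x t - μ • gradient f (x t) - y‖)
    (φ : ℕ → ℕ) (xstar : H)
    (hconv : Tendsto (fun j => x (φ j)) atTop (𝓝 xstar))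
    (hdiff0 : Tendsto (fun j => ‖x (φ j + 1) - x (φ j)‖) atTop (𝓝 0)) :
    xstar ∈ C ∧
      (∀ y ∈ C, ‖xstar - μ • gradient f xstar - xstar‖
        ≤ ‖xstar - μ • gradient f xstar - y‖) ∧
      ∀ y ∈ C, 0 ≤ ⟪gradient f xstar, y - xstar⟫ := by
  have hxC : xstar ∈ C := hCclosed.mem_of_tendsto hconv (.of_forall fun j => hmem (φ j))
  have hnext : Tendsto (fun j => x (φ j + 1)) atTop (𝓝 xstar) :=
    hconv.congr_dist (by simpa only [dist_eq_norm, norm_sub_rev] using hdiff0)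
  have hstep : Tendsto (fun j => x (φ j) - μ • gradient f (x (φ j))) atTop
      (𝓝 (xstar - μ • gradient f xstar)) :=
    hconv.sub ((((hf.continuous_gradient one_ne_zero).tendsto xstar).comp hconv).const_smul μ)
  have hfix : ∀ y ∈ C, ‖xstar - μ • gradient f xstar - xstar‖
      ≤ ‖xstar - μ • gradient f xstar - y‖ := fun y hy =>
    le_of_tendsto_of_tendsto' (hstep.sub hnext).norm (hstep.sub_const y).norm
      fun j => hproj (φ j) y hy
  exact ⟨hxC, hfix, real_inner_nonneg_of_forall_norm_sub_smul_le hCconv hxC hμ hfix⟩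

/-- Cluster points of the projected gradient iteration are fixed points of the projected
gradient map and stationary points of `f` over `C`. -/
theorem projected_gradient_cluster_point_stationary
    {H : Type*} [NormedAddCommGroup H] [InnerProductSpace ℝ H] [CompleteSpace H]
    (C : Set H) (hCclosed : IsClosed C) (hCconv : Convex ℝ C) (hCne : C.Nonempty)
    (f : H → ℝ) (hf : ContDiff ℝ 1 f)
    (μ : ℝ) (hμ : 0 < μ)
    (x : ℕ → H) (hmem : ∀ t : ℕ, x t ∈ C)
    (hproj : ∀ t : ℕ, ∀ y ∈ C,
      ‖x t - μ • gradient f (x t) - x (t + 1)‖ ≤ ‖x t - μ • gradient f (x t) - y‖)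
    (φ : ℕ → ℕ) (hφ : StrictMono φ) (xstar : H)
    (hconv : Tendsto (fun j => x (φ j)) atTop (𝓝 xstar))
    (hdiff0 : Tendsto (fun j => ‖x (φ j + 1) - x (φ j)‖) atTop (𝓝 0)) :
    xstar ∈ C ∧
      (∀ y ∈ C, ‖xstar - μ • gradient f xstar - xstar‖
        ≤ ‖xstar - μ • gradient f xstar - y‖) ∧
      ∀ y ∈ C, 0 ≤ ⟪gradient f xstar, y - xstar⟫ :=
  projected_gradient_cluster_point_stationary_general C hCclosed hCconv f hf μ hμ x hmem hproj φ
    xstar hconv hdiff0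
end
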